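/- arXiv:2501.00417 — 2 statements merged into one kernel-verified Lean document; each statement's English description precedes it below -/
import Mathlib

section
/- Let P_T be an n×n nonnegative matrix with row sums at most 1 and spectral radius less than 1, and define λ_T = e^T (I - P_T)^{-1} / (e^T (I - P_T)^{-1} e). Then λ_T is a stationary probability vector of the stochastic matrix Q_T := P_T + (e - P_T e) μ, where μ = e^T/n; that is, λ_T ≥ 0, λ_T e = 1, and λ_T Q_T = λ_T. -/
/-!
Since `‖P‖∞ ≤ 1`, the Neumann series shows `(1 - s • P)⁻¹ ≥ 0` entrywise for `0 < s < 1`;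
as `1 ∉ spectrum ℝ P`, the inverse is continuous at `1 - P` and `s → 1` gives `(1 - P)⁻¹ ≥ 0`.
Hence `y = e (1 - P)⁻¹` satisfies `y = e + y P ≥ e`, and `λ = y / (y e)` has `λ (1 - P)` a multiple
of `μ`. For any such `λ`, the rank-one term of `Q` feeds back exactly the mass `λ (e - P e)` that
`λ P` loses, so `λ Q = λ`.
-/

open Matrix Filter Topology

theorem isUnit_one_sub_of_spectralRadius_lt_one {𝕜 A : Type*} [NormedField 𝕜] [Ring A]
    [Algebra 𝕜 A] {a : A} (h : spectralRadius 𝕜 a < 1) : IsUnit (1 - a) := by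
  have h1 := spectrum.mem_resolventSet_of_spectralRadius_lt (k := (1 : 𝕜)) (by simpa using h)
  simpa using spectrum.mem_resolventSet_iff.mp h1

namespace Matrix

variable {ι : Type*} [Fintype ι]

theorem vecMul_apply_nonneg {R : Type*} [Semiring R] [PartialOrder R] [IsOrderedRing R]
    {v : ι → R} {A : Matrix ι ι R} (hv : ∀ i, 0 ≤ v i) (hA : ∀ i j, 0 ≤ A i j) (j : ι) :
    0 ≤ (v ᵥ* A) j :=
  Finset.sum_nonneg fun i _ => mul_nonneg (hv i) (hA i j)

variable [DecidableEq ι]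

theorem vecMul_add_vecMulVec_eq_self {R : Type*} [CommRing R] {P : Matrix ι ι R}
    {v μ e : ι → R} {a : R} (hv : v ᵥ* (1 - P) = a • μ) (hμ : μ ⬝ᵥ e = 1) :
    v ᵥ* (P + vecMulVec (e - P *ᵥ e) μ) = v := by
  have hvP : v ᵥ* P = v - a • μ := by
    rw [← hv, vecMul_sub, vecMul_one, sub_sub_cancel]
  have hv_exit : v ⬝ᵥ (e - P *ᵥ e) = a := by
    rw [show e - P *ᵥ e = (1 - P) *ᵥ e by rw [sub_mulVec, one_mulVec], dotProduct_mulVec, hv,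
      smul_dotProduct, hμ, smul_eq_mul, mul_one]
  rw [vecMul_add, hvP, vecMul_vecMulVec, hv_exit, sub_add_cancel]

section linfty

attribute [local instance] Matrix.linftyOpNormedAddCommGroup Matrix.linftyOpNormedRing
  Matrix.linftyOpNormedAlgebra

theorem linfty_opNorm_le_one {P : Matrix ι ι ℝ} (hP : ∀ i j, 0 ≤ P i j)
    (hrow : ∀ i, ∑ j, P i j ≤ 1) : ‖P‖ ≤ 1 := by
  rw [linfty_opNorm_def, NNReal.coe_le_one, Finset.sup_le_iff]
  intro i _
  rw [← NNReal.coe_le_coe, NNReal.coe_sum]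
  simpa [abs_of_nonneg (hP i _)] using hrow i

theorem ringInverse_one_sub_apply_nonneg {P : Matrix ι ι ℝ} (hP : ∀ i j, 0 ≤ P i j)
    (hnorm : ‖P‖ < 1) (i j : ι) : 0 ≤ Ring.inverse (1 - P) i j :=
  (Pi.hasSum.mp (Pi.hasSum.mp (hasSum_geom_series_inverse P hnorm) i) j).nonneg
    fun k => pow_apply_nonneg hP k i j

theorem inv_one_sub_apply_nonneg {P : Matrix ι ι ℝ} (hP : ∀ i j, 0 ≤ P i j)
    (hrow : ∀ i, ∑ j, P i j ≤ 1) (hunit : IsUnit (1 - P)) (i j : ι) :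
    0 ≤ (1 - P)⁻¹ i j := by
  have hlim : Tendsto (fun s : ℝ => Ring.inverse (1 - s • P)) (𝓝[<] 1)
      (𝓝 (Ring.inverse (1 - P))) := by
    have hinv := NormedRing.inverse_continuousAt hunit.unit
    rw [hunit.unit_spec] at hinv
    refine (hinv.tendsto.comp ?_).mono_left nhdsWithin_le_nhds
    exact Continuous.tendsto' (by fun_prop) _ _ (by simp)
  have hev : ∀ᶠ s in 𝓝[<] (1 : ℝ), 0 ≤ Ring.inverse (1 - s • P : Matrix ι ι ℝ) i j := by
    filter_upwards [Ioo_mem_nhdsLT zero_lt_one] with s ⟨hs0, hs1⟩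
    refine ringInverse_one_sub_apply_nonneg (fun k l => mul_nonneg hs0.le (hP k l)) ?_ i j
    calc ‖s • P‖ = s * ‖P‖ := by rw [norm_smul, Real.norm_of_nonneg hs0.le]
      _ ≤ s := mul_le_of_le_one_right hs0.le (linfty_opNorm_le_one hP hrow)
      _ < 1 := hs1
  rw [nonsing_inv_eq_ringInverse]
  exact ge_of_tendsto (((continuous_apply j).comp (continuous_apply i)).tendsto _ |>.comp hlim) hev

end linfty

end Matrix

theorem stmt1 {n : ℕ} (hn : 0 < n) (P : Matrix (Fin n) (Fin n) ℝ)
    (hPnn : ∀ i j, 0 ≤ P i j)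
    (hsub : ∀ i, ∑ j, P i j ≤ 1)
    (hρ : spectralRadius ℝ P < 1) :
    ∀ e : Fin n → ℝ, e = (fun _ => 1) →
    ∀ μ : Fin n → ℝ, μ = (n : ℝ)⁻¹ • e →
    ∀ lam : Fin n → ℝ, lam = ((e ᵥ* (1 - P)⁻¹) ⬝ᵥ e)⁻¹ • (e ᵥ* (1 - P)⁻¹) →
    ∀ Q : Matrix (Fin n) (Fin n) ℝ, Q = P + vecMulVec (e - P *ᵥ e) μ →
    (∀ j, 0 ≤ lam j) ∧ lam ⬝ᵥ e = 1 ∧ lam ᵥ* Q = lam := by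
  rintro e rfl μ rfl lam rfl Q rfl
  have hunit := isUnit_one_sub_of_spectralRadius_lt_one hρ
  set y := (fun _ => 1) ᵥ* (1 - P)⁻¹
  have hy : y ᵥ* (1 - P) = fun _ => 1 := by
    rw [vecMul_vecMul, nonsing_inv_mul _ ((isUnit_iff_isUnit_det _).mp hunit), vecMul_one]
  have hy_nonneg (j : Fin n) : 0 ≤ y j :=
    vecMul_apply_nonneg (fun _ => zero_le_one) (inv_one_sub_apply_nonneg hPnn hsub hunit) j
  have hy_pos (j : Fin n) : 0 < y j := by
    have hj := congrFun hy j
    rw [vecMul_sub, vecMul_one, Pi.sub_apply, sub_eq_iff_eq_add] at hj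
    linarith [vecMul_apply_nonneg hy_nonneg hPnn j]
  have hc : 0 < y ⬝ᵥ fun _ => 1 := by
    simpa [dotProduct] using
      Finset.sum_pos (fun j _ => hy_pos j) (Finset.univ_nonempty_iff.mpr ⟨⟨0, hn⟩⟩)
  refine ⟨fun j => mul_nonneg (inv_nonneg.mpr hc.le) (hy_nonneg j), ?_, ?_⟩
  · rw [smul_dotProduct, smul_eq_mul, inv_mul_cancel₀ hc.ne']
  · refine vecMul_add_vecMulVec_eq_self (a := (y ⬝ᵥ fun _ => 1)⁻¹ * n) ?_ ?_
    · rw [smul_vecMul, hy, mul_smul, smul_inv_smul₀ (by positivity)]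
    · simp [dotProduct, hn.ne']
end

section
/- Let P_T be an n×n nonnegative, row-substochastic matrix with spectral radius < 1, and let P_{T,R} (n×r), P_{T,D} (n×d) be nonnegative matrices with P_{T,R} e + P_T e + P_{T,D} e = e. Define the (r+n+d)×(r+n+d) stochastic matrix M_T̂ with block structure: rows indexed by R' map to T via e μ_T (μ_T = e^T/n uniform on T), rows indexed by T map via [P_{T,R}, P_T, P_{T,D}], and rows indexed by D' map to T via e μ_T. Then the row vector φ = (1/(1+θ_T)) · (λ_T P_{T,R}, λ_T, λ_T P_{T,D}), where λ_T = e^T (I-P_T)^{-1} / (e^T (I-P_T)^{-1} e) and θ_T = 1 - λ_T P_T e, is a stationary probability vector of M_T̂: φ ≥ 0, φ e = 1, φ M_T̂ = φ. -/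
open Matrix

open NNReal ENNReal in
lemma aux_unit {n : ℕ} (P : Matrix (Fin n) (Fin n) ℝ) (hρ : spectralRadius ℝ P < 1)
    {t : ℝ} (ht0 : 0 ≤ t) (ht1 : t ≤ 1) : IsUnit (1 - t • P) := by
  rcases eq_or_lt_of_le ht0 with h0 | h0
  · simp [← h0]
  · have ht0' : t ≠ 0 := ne_of_gt h0
    have h1 : (1 : ℝ) ≤ |t|⁻¹ := by
      rw [abs_of_pos h0]
      exact (one_le_inv₀ h0).2 ht1
    have h2 : (1 : NNReal) ≤ ‖t⁻¹‖₊ := by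
      rw [← NNReal.coe_le_coe]
      simpa [Real.norm_eq_abs, abs_inv] using h1
    have h3 : (1 : ENNReal) ≤ (‖t⁻¹‖₊ : ENNReal) := by exact_mod_cast h2
    have hk : spectralRadius ℝ P < ‖t⁻¹‖₊ := hρ.trans_le h3
    have hres : IsUnit ((algebraMap ℝ (Matrix (Fin n) (Fin n) ℝ)) t⁻¹ - P) := by
      by_contra hnot
      have hmem : t⁻¹ ∈ spectrum ℝ P := spectrum.mem_iff.mpr hnot
      have hle : (‖t⁻¹‖₊ : ℝ≥0∞) ≤ spectralRadius ℝ P :=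
        le_iSup₂ (f := fun k (_ : k ∈ spectrum ℝ P) => (‖k‖₊ : ℝ≥0∞)) t⁻¹ hmem
      exact absurd hle (not_le.2 hk)
    have heq : 1 - t • P = t • ((algebraMap ℝ (Matrix (Fin n) (Fin n) ℝ)) t⁻¹ - P) := by
      rw [Algebra.algebraMap_eq_smul_one, smul_sub, smul_smul, mul_inv_cancel₀ ht0', one_smul]
    rw [heq, Matrix.isUnit_iff_isUnit_det, Matrix.det_smul]
    exact (isUnit_iff_ne_zero.2 (pow_ne_zero _ ht0')).mul
      ((Matrix.isUnit_iff_isUnit_det _).mp hres)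

lemma aux_inv_entry_nonneg {n : ℕ} (P : Matrix (Fin n) (Fin n) ℝ)
    (hPnn : ∀ i j, 0 ≤ P i j) (hsub : ∀ i, ∑ j, P i j ≤ 1)
    {t : ℝ} (ht0 : 0 ≤ t) (ht1 : t < 1) (hu : IsUnit (1 - t • P)) :
    ∀ i j, 0 ≤ (1 - t • P)⁻¹ i j := by
  intro i j
  by_contra hneg
  push_neg at hneg
  set A := (1 - t • P)⁻¹ with hA
  have hmul : (1 - t • P) * A = 1 :=
    Matrix.mul_nonsing_inv _ ((Matrix.isUnit_iff_isUnit_det _).mp hu)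
  have hid : ∀ k, A k j - t * ∑ l, P k l * A l j = if k = j then 1 else 0 := by
    intro k
    have h := congrFun (congrFun hmul k) j
    simp only [Matrix.mul_apply, Matrix.sub_apply, Matrix.smul_apply, smul_eq_mul, sub_mul,
      Finset.sum_sub_distrib, Matrix.one_apply, ite_mul, one_mul, zero_mul,
      Finset.sum_ite_eq, Finset.mem_univ, if_true] at h
    rw [← h, Finset.mul_sum]
    ring_nf
  obtain ⟨i0, -, hmin⟩ := Finset.exists_min_image Finset.univ (fun k => A k j)
    ⟨i, Finset.mem_univ i⟩
  have hmneg : A i0 j < 0 := lt_of_le_of_lt (hmin i (Finset.mem_univ i)) hneg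
  have h1 : (∑ l, P i0 l) * A i0 j ≤ ∑ l, P i0 l * A l j := by
    rw [Finset.sum_mul]
    exact Finset.sum_le_sum fun l _ =>
      mul_le_mul_of_nonneg_left (hmin l (Finset.mem_univ l)) (hPnn i0 l)
  have h2 : A i0 j ≤ (∑ l, P i0 l) * A i0 j := by nlinarith [hsub i0]
  have h3 : t * A i0 j ≤ t * ∑ l, P i0 l * A l j :=
    mul_le_mul_of_nonneg_left (le_trans h2 h1) ht0
  have h4 : A i0 j < t * A i0 j := by nlinarith
  have h5 := hid i0
  have hδ : (0:ℝ) ≤ if i0 = j then (1:ℝ) else 0 := by split <;> norm_num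
  linarith

lemma aux_inv_nonneg {n : ℕ} (P : Matrix (Fin n) (Fin n) ℝ)
    (hPnn : ∀ i j, 0 ≤ P i j) (hsub : ∀ i, ∑ j, P i j ≤ 1)
    (hρ : spectralRadius ℝ P < 1) : ∀ i j, 0 ≤ (1 - P)⁻¹ i j := by
  intro i j
  have hu1 : IsUnit (1 - P) := by
    simpa using aux_unit P hρ zero_le_one le_rfl
  have hdet1 : ((1 : Matrix (Fin n) (Fin n) ℝ) - (1:ℝ) • P).det ≠ 0 := by
    simpa using ((Matrix.isUnit_iff_isUnit_det _).mp hu1).ne_zero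
  have hcM : Continuous fun t : ℝ => (1 : Matrix (Fin n) (Fin n) ℝ) - t • P :=
    continuous_const.sub (continuous_id.smul continuous_const)
  have hcd : Continuous fun t : ℝ => ((1 : Matrix (Fin n) (Fin n) ℝ) - t • P).det :=
    hcM.matrix_det
  have hca : Continuous fun t : ℝ => ((1 : Matrix (Fin n) (Fin n) ℝ) - t • P).adjugate i j :=
    hcM.matrix_adjugate.matrix_elem i j
  have hct : ContinuousAt
      (fun t : ℝ => (((1 : Matrix (Fin n) (Fin n) ℝ) - t • P).det)⁻¹ *
        ((1 : Matrix (Fin n) (Fin n) ℝ) - t • P).adjugate i j) 1 :=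
    (hcd.continuousAt.inv₀ hdet1).mul hca.continuousAt
  have hfun : ∀ t : ℝ, (((1 : Matrix (Fin n) (Fin n) ℝ) - t • P).det)⁻¹ *
      ((1 : Matrix (Fin n) (Fin n) ℝ) - t • P).adjugate i j
      = ((1 : Matrix (Fin n) (Fin n) ℝ) - t • P)⁻¹ i j := by
    intro t
    rw [Matrix.inv_def, Ring.inverse_eq_inv']
    simp [smul_eq_mul]
  have hct2 : ContinuousAt (fun t : ℝ => ((1 : Matrix (Fin n) (Fin n) ℝ) - t • P)⁻¹ i j) 1 := by
    have : (fun t : ℝ => (((1 : Matrix (Fin n) (Fin n) ℝ) - t • P).det)⁻¹ *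
        ((1 : Matrix (Fin n) (Fin n) ℝ) - t • P).adjugate i j)
        = fun t : ℝ => ((1 : Matrix (Fin n) (Fin n) ℝ) - t • P)⁻¹ i j := funext hfun
    rwa [this] at hct
  have htend : Filter.Tendsto (fun t : ℝ => ((1 : Matrix (Fin n) (Fin n) ℝ) - t • P)⁻¹ i j)
      (nhdsWithin 1 (Set.Iio 1)) (nhds ((1 - P)⁻¹ i j)) := by
    have h := hct2.continuousWithinAt (s := Set.Iio 1)
    simpa [ContinuousWithinAt] using h
  refine ge_of_tendsto htend ?_
  filter_upwards [Ioo_mem_nhdsLT_of_mem (by norm_num : (1:ℝ) ∈ Set.Ioc 0 1)] with t ht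
  exact aux_inv_entry_nonneg P hPnn hsub ht.1.le ht.2 (aux_unit P hρ ht.1.le ht.2.le) i j

/-- The extended transient-class transition matrix `M_T̂` of the random-surfer model:
rows in `R'` and `D'` jump to `T` uniformly, rows in `T` move via `[P_TR | P_T | P_TD]`. -/
noncomputable def Mhat {r n d : ℕ} (P_TR : Matrix (Fin n) (Fin r) ℝ)
    (P_T : Matrix (Fin n) (Fin n) ℝ) (P_TD : Matrix (Fin n) (Fin d) ℝ) :
    Matrix (Fin r ⊕ Fin n ⊕ Fin d) (Fin r ⊕ Fin n ⊕ Fin d) ℝ :=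
  Matrix.of fun p q =>
    match p, q with
    | Sum.inl _, Sum.inr (Sum.inl _) => (n : ℝ)⁻¹
    | Sum.inl _, _ => 0
    | Sum.inr (Sum.inl i), Sum.inl j => P_TR i j
    | Sum.inr (Sum.inl i), Sum.inr (Sum.inl j) => P_T i j
    | Sum.inr (Sum.inl i), Sum.inr (Sum.inr j) => P_TD i j
    | Sum.inr (Sum.inr _), Sum.inr (Sum.inl _) => (n : ℝ)⁻¹
    | Sum.inr (Sum.inr _), _ => 0

theorem stmt8 {r n d : ℕ} (hn : 0 < n)
    (P_TR : Matrix (Fin n) (Fin r) ℝ)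
    (P_T : Matrix (Fin n) (Fin n) ℝ)
    (P_TD : Matrix (Fin n) (Fin d) ℝ)
    (hTRnn : ∀ i j, 0 ≤ P_TR i j)
    (hTnn : ∀ i j, 0 ≤ P_T i j)
    (hTDnn : ∀ i j, 0 ≤ P_TD i j)
    (hsub : ∀ i, ∑ j, P_T i j ≤ 1)
    (hρ : spectralRadius ℝ P_T < 1)
    (hrows : ∀ i, (∑ j, P_TR i j) + (∑ j, P_T i j) + (∑ j, P_TD i j) = 1)
    (e : Fin n → ℝ) (he : e = fun _ => 1)
    (lamT : Fin n → ℝ)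
    (hlamT : lamT = ((e ᵥ* (1 - P_T)⁻¹) ⬝ᵥ e)⁻¹ • (e ᵥ* (1 - P_T)⁻¹))
    (θ : ℝ) (hθ : θ = 1 - (lamT ᵥ* P_T) ⬝ᵥ e)
    (φ : Fin r ⊕ Fin n ⊕ Fin d → ℝ)
    (hφ : φ = Sum.elim ((1 + θ)⁻¹ • (lamT ᵥ* P_TR))
      (Sum.elim ((1 + θ)⁻¹ • lamT) ((1 + θ)⁻¹ • (lamT ᵥ* P_TD)))) :
    (∀ p, 0 ≤ φ p) ∧ (∑ p, φ p) = 1 ∧ φ ᵥ* Mhat P_TR P_T P_TD = φ := by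
  have hNn : (0:ℝ) < n := by exact_mod_cast hn
  have hNne : (n:ℝ) ≠ 0 := ne_of_gt hNn
  have hu1 : IsUnit (1 - P_T) := by simpa using aux_unit P_T hρ zero_le_one le_rfl
  have hAnn : ∀ i j, 0 ≤ (1 - P_T)⁻¹ i j := aux_inv_nonneg P_T hTnn hsub hρ
  set x : Fin n → ℝ := e ᵥ* (1 - P_T)⁻¹ with hxdef
  have hx_apply : ∀ k, x k = ∑ l, e l * (1 - P_T)⁻¹ l k := fun k => rfl
  have hxnn : ∀ k, 0 ≤ x k := by
    intro k
    rw [hx_apply]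
    exact Finset.sum_nonneg fun l _ => mul_nonneg (by rw [he]; norm_num) (hAnn l k)
  have h1 : x ᵥ* (1 - P_T) = e := by
    rw [hxdef, Matrix.vecMul_vecMul,
      Matrix.nonsing_inv_mul _ ((Matrix.isUnit_iff_isUnit_det _).mp hu1), Matrix.vecMul_one]
  rw [Matrix.vecMul_sub, Matrix.vecMul_one] at h1
  have hxP : ∀ k, (x ᵥ* P_T) k = x k - 1 := by
    intro k
    have h2 := congrFun h1 k
    have h3 : e k = 1 := by rw [he]
    simp only [Pi.sub_apply] at h2
    linarith
  have hVx : ∀ k, (x ᵥ* P_T) k = ∑ i, x i * P_T i k := fun k => rfl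
  have hxP_nn : ∀ k, 0 ≤ (x ᵥ* P_T) k := by
    intro k
    rw [hVx]
    exact Finset.sum_nonneg fun i _ => mul_nonneg (hxnn i) (hTnn i k)
  have hx1 : ∀ k, 1 ≤ x k := by
    intro k
    have := hxP k
    have := hxP_nn k
    linarith
  have hDval : x ⬝ᵥ e = ∑ k, x k := by
    simp [dotProduct, he]
  have hD : (n:ℝ) ≤ x ⬝ᵥ e := by
    rw [hDval]
    calc (n:ℝ) = ∑ _k : Fin n, (1:ℝ) := by simp
    _ ≤ ∑ k, x k := Finset.sum_le_sum fun k _ => hx1 k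
  have hDpos : (0:ℝ) < x ⬝ᵥ e := lt_of_lt_of_le hNn hD
  have hDne : x ⬝ᵥ e ≠ 0 := ne_of_gt hDpos
  set c : ℝ := (x ⬝ᵥ e)⁻¹ with hcdef
  have hcpos : 0 < c := inv_pos.2 hDpos
  have hlamk : ∀ k, lamT k = c * x k := by
    intro k; rw [hlamT]; rfl
  have hlam_nn : ∀ k, 0 ≤ lamT k := fun k => by
    rw [hlamk]; exact mul_nonneg hcpos.le (hxnn k)
  have hlsum : ∑ k, lamT k = 1 := by
    simp only [hlamk]
    rw [← Finset.mul_sum, ← hDval, hcdef, inv_mul_cancel₀ hDne]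
  have hVR : ∀ j, (lamT ᵥ* P_TR) j = ∑ i, lamT i * P_TR i j := fun j => rfl
  have hVT : ∀ k, (lamT ᵥ* P_T) k = ∑ i, lamT i * P_T i k := fun k => rfl
  have hVD : ∀ j, (lamT ᵥ* P_TD) j = ∑ i, lamT i * P_TD i j := fun j => rfl
  have hlamP : ∀ k, (lamT ᵥ* P_T) k = lamT k - c := by
    intro k
    have h3 : (lamT ᵥ* P_T) k = c * (x ᵥ* P_T) k := by
      rw [hVT, hVx, Finset.mul_sum]
      exact Finset.sum_congr rfl fun i _ => by rw [hlamk]; ring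
    rw [h3, hxP k, hlamk k]; ring
  have hθval : θ = n * c := by
    rw [hθ]
    have h4 : (lamT ᵥ* P_T) ⬝ᵥ e = ∑ k, (lamT k - c) := by
      simp [dotProduct, he, hlamP]
    rw [h4, Finset.sum_sub_distrib, hlsum]
    simp [Finset.card_univ]
  have hθpos : 0 < θ := by rw [hθval]; positivity
  have h1θ : (0:ℝ) < 1 + θ := by linarith
  have h1θinv : (0:ℝ) ≤ (1+θ)⁻¹ := inv_nonneg.2 h1θ.le
  have hSR : ∑ j, (lamT ᵥ* P_TR) j = ∑ i, lamT i * ∑ j, P_TR i j := by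
    simp only [hVR, Finset.mul_sum]
    exact Finset.sum_comm
  have hSD : ∑ j, (lamT ᵥ* P_TD) j = ∑ i, lamT i * ∑ j, P_TD i j := by
    simp only [hVD, Finset.mul_sum]
    exact Finset.sum_comm
  have hTT : ∑ i, lamT i * ∑ j, P_T i j = 1 - θ := by
    have h4 : ∑ i, lamT i * ∑ j, P_T i j = ∑ k, (lamT ᵥ* P_T) k := by
      simp only [hVT, Finset.mul_sum]
      exact Finset.sum_comm
    rw [h4]
    simp only [hlamP]
    rw [Finset.sum_sub_distrib, hlsum]
    simp [Finset.card_univ, hθval]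
  have hRD : ∑ j, (lamT ᵥ* P_TR) j + ∑ j, (lamT ᵥ* P_TD) j = θ := by
    rw [hSR, hSD, ← Finset.sum_add_distrib]
    have h5 : ∀ i, lamT i * ∑ j, P_TR i j + lamT i * ∑ j, P_TD i j
        = lamT i - lamT i * ∑ j, P_T i j := by
      intro i
      rw [← mul_add, show (∑ j, P_TR i j) + (∑ j, P_TD i j) = 1 - ∑ j, P_T i j from by
        linarith [hrows i], mul_sub, mul_one]
    rw [Finset.sum_congr rfl fun i _ => h5 i, Finset.sum_sub_distrib, hlsum, hTT]
    ring
  have hninv : (n:ℝ)⁻¹ * θ = c := by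
    rw [hθval]; field_simp
  refine ⟨?_, ?_, ?_⟩
  · intro p
    rcases p with a | i | b
    · rw [hφ]
      simp only [Sum.elim_inl, Pi.smul_apply, smul_eq_mul]
      refine mul_nonneg h1θinv ?_
      rw [hVR]
      exact Finset.sum_nonneg fun i _ => mul_nonneg (hlam_nn i) (hTRnn i a)
    · rw [hφ]
      simp only [Sum.elim_inr, Sum.elim_inl, Pi.smul_apply, smul_eq_mul]
      exact mul_nonneg h1θinv (hlam_nn i)
    · rw [hφ]
      simp only [Sum.elim_inr, Pi.smul_apply, smul_eq_mul]
      refine mul_nonneg h1θinv ?_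
      rw [hVD]
      exact Finset.sum_nonneg fun i _ => mul_nonneg (hlam_nn i) (hTDnn i b)
  · rw [hφ, Fintype.sum_sum_type, Fintype.sum_sum_type]
    simp only [Sum.elim_inl, Sum.elim_inr, Pi.smul_apply, smul_eq_mul]
    rw [← Finset.mul_sum, ← Finset.mul_sum, ← Finset.mul_sum, hlsum]
    have := hRD
    field_simp
    linarith
  · funext q
    have happ : (φ ᵥ* Mhat P_TR P_T P_TD) q = ∑ p, φ p * Mhat P_TR P_T P_TD p q := rfl
    rw [happ, Fintype.sum_sum_type, Fintype.sum_sum_type]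
    rcases q with j | k | j
    · simp only [Mhat, Matrix.of_apply, hφ, Sum.elim_inl, Sum.elim_inr, Pi.smul_apply,
        smul_eq_mul, mul_zero, Finset.sum_const_zero, zero_add, add_zero]
      rw [hVR j, Finset.mul_sum]
      exact Finset.sum_congr rfl fun i _ => by ring
    · simp only [Mhat, Matrix.of_apply, hφ, Sum.elim_inl, Sum.elim_inr, Pi.smul_apply,
        smul_eq_mul]
      have t1 : ∑ a, (1 + θ)⁻¹ * (lamT ᵥ* P_TR) a * (n:ℝ)⁻¹
          = (1+θ)⁻¹ * (n:ℝ)⁻¹ * ∑ a, (lamT ᵥ* P_TR) a := by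
        rw [Finset.mul_sum]
        exact Finset.sum_congr rfl fun a _ => by ring
      have t2 : ∑ b, (1 + θ)⁻¹ * (lamT ᵥ* P_TD) b * (n:ℝ)⁻¹
          = (1+θ)⁻¹ * (n:ℝ)⁻¹ * ∑ b, (lamT ᵥ* P_TD) b := by
        rw [Finset.mul_sum]
        exact Finset.sum_congr rfl fun a _ => by ring
      have t3 : ∑ i, (1 + θ)⁻¹ * lamT i * P_T i k = (1+θ)⁻¹ * (lamT k - c) := by
        rw [← hlamP k, hVT k, Finset.mul_sum]
        exact Finset.sum_congr rfl fun i _ => by ring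
      rw [t1, t2, t3]
      linear_combination (1+θ)⁻¹ * (n:ℝ)⁻¹ * hRD + (1+θ)⁻¹ * hninv
    · simp only [Mhat, Matrix.of_apply, hφ, Sum.elim_inl, Sum.elim_inr, Pi.smul_apply,
        smul_eq_mul, mul_zero, Finset.sum_const_zero, zero_add, add_zero]
      rw [hVD j, Finset.mul_sum]
      exact Finset.sum_congr rfl fun i _ => by ring
end
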